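/- arXiv:2309.06304 — 8 statements merged into one kernel-verified Lean document; each statement's English description precedes it below -/
import Mathlib

section
/- For every real number c with 0 < c < 1, the 5 × 5 real symmetric matrix [[8+c²,8,0,0,2c],[8,16,8,0,0],[0,8,16,8,0],[0,0,8,8+c²,2c],[2c,0,0,2c,2c²]] is positive definite. -/
/-- For every real `0 < c < 1`, the 5 × 5 real symmetric matrix
`[[8+c²,8,0,0,2c],[8,16,8,0,0],[0,8,16,8,0],[0,0,8,8+c²,2c],[2c,0,0,2c,2c²]]`
is positive definite. -/
theorem stmt_4 (c : ℝ) (hc0 : 0 < c) (hc1 : c < 1) :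
    (!![8 + c ^ 2, 8, 0, 0, 2 * c;
        8, 16, 8, 0, 0;
        0, 8, 16, 8, 0;
        0, 0, 8, 8 + c ^ 2, 2 * c;
        2 * c, 0, 0, 2 * c, 2 * c ^ 2] : Matrix (Fin 5) (Fin 5) ℝ).PosDef := by
  constructor
  · ext i j
    fin_cases i <;> fin_cases j <;> simp [Matrix.conjTranspose_apply, Matrix.vecHead, Matrix.vecTail]
  · intro x hx
    have h5 : ∃ i, x i ≠ 0 := by
      by_contra h
      push_neg at h
      exact hx (Finsupp.ext h)
    obtain ⟨i, hi⟩ := h5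
    set x0 := x 0; set x1 := x 1; set x2 := x 2; set x3 := x 3; set x4 := x 4
    have key : (x.sum fun i xi => x.sum fun j xj => star xi * (!![8 + c ^ 2, 8, 0, 0, 2 * c;
        8, 16, 8, 0, 0;
        0, 8, 16, 8, 0;
        0, 0, 8, 8 + c ^ 2, 2 * c;
        2 * c, 0, 0, 2 * c, 2 * c ^ 2] : Matrix (Fin 5) (Fin 5) ℝ) i j * xj) =
        2 * (x0 + 2*x1 + x2)^2 + 2 * (x1 + 2*x2 + x3)^2 + 2 * (x0 + x1 - x2 - x3)^2
        + 2 * (x0 + x1)^2 + 2 * (x1 + x2)^2 + 2 * (x2 + x3)^2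
        + (c*x0)^2 + (c*x3)^2 + 2 * (c*x4 + x0 + x3)^2 := by
      simp [Finsupp.sum_fintype, Matrix.mulVec, Fin.sum_univ_five, Matrix.cons_val_zero,
        Matrix.cons_val_one, Matrix.vecHead, Matrix.vecTail]
      ring
    rw [key]
    by_contra hQ
    push_neg at hQ
    have n1 := sq_nonneg (x0 + 2*x1 + x2)
    have n2 := sq_nonneg (x1 + 2*x2 + x3)
    have n3 := sq_nonneg (x0 + x1 - x2 - x3)
    have n4 := sq_nonneg (x0 + x1)
    have n5 := sq_nonneg (x1 + x2)
    have n6 := sq_nonneg (x2 + x3)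
    have n7 := sq_nonneg (c*x0)
    have n8 := sq_nonneg (c*x3)
    have n9 := sq_nonneg (c*x4 + x0 + x3)
    have hcne : c ≠ 0 := ne_of_gt hc0
    have e7 : (c*x0)^2 = 0 := le_antisymm (by linarith) n7
    have e8 : (c*x3)^2 = 0 := le_antisymm (by linarith) n8
    have e4 : (x0 + x1)^2 = 0 := le_antisymm (by linarith) n4
    have e5 : (x1 + x2)^2 = 0 := le_antisymm (by linarith) n5
    have e6 : (x2 + x3)^2 = 0 := le_antisymm (by linarith) n6
    have e9 : (c*x4 + x0 + x3)^2 = 0 := le_antisymm (by linarith) n9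
    have h0 : x0 = 0 := by
      have := pow_eq_zero_iff (n := 2) (by norm_num) |>.mp e7
      rcases mul_eq_zero.mp this with h | h
      · exact absurd h hcne
      · exact h
    have h3 : x3 = 0 := by
      have := pow_eq_zero_iff (n := 2) (by norm_num) |>.mp e8
      rcases mul_eq_zero.mp this with h | h
      · exact absurd h hcne
      · exact h
    have h1 : x1 = 0 := by
      have := pow_eq_zero_iff (n := 2) (by norm_num) |>.mp e4
      linarith
    have h2 : x2 = 0 := by
      have := pow_eq_zero_iff (n := 2) (by norm_num) |>.mp e5
      linarith
    have h4 : x4 = 0 := by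
      have h := pow_eq_zero_iff (n := 2) (by norm_num) |>.mp e9
      rw [h0, h3] at h
      have : c * x4 = 0 := by linarith
      rcases mul_eq_zero.mp this with h' | h'
      · exact absurd h' hcne
      · exact h'
    apply hx
    ext j
    fin_cases j <;> assumption
end

section
/- For every real number c with 0 < c < 1, the 5 × 5 real symmetric matrix [[8+c²,8,0,2c,0],[8,16,8,0,0],[0,8,8+c²,0,2c],[2c,0,0,8+c²,8],[0,0,2c,8,8+c²]] is positive definite. -/
set_option maxHeartbeats 1000000

lemma quad_pos (c a b d e f : ℝ) (hc0 : 0 < c) (hc1 : c < 1)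
    (hne : a ≠ 0 ∨ b ≠ 0 ∨ d ≠ 0 ∨ e ≠ 0 ∨ f ≠ 0) :
    0 < (8 + c ^ 2) * (a ^ 2 + d ^ 2 + e ^ 2 + f ^ 2) + 16 * b ^ 2
      + 16 * a * b + 16 * b * d + 4 * c * a * e + 4 * c * d * f + 16 * e * f := by
  have sq_pos : ∀ x : ℝ, x ≠ 0 → 0 < x ^ 2 := fun x hx =>
    lt_of_le_of_ne (sq_nonneg x) (Ne.symm (pow_ne_zero 2 hx))
  have hid : (8 + c ^ 2) * (a ^ 2 + d ^ 2 + e ^ 2 + f ^ 2) + 16 * b ^ 2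
      + 16 * a * b + 16 * b * d + 4 * c * a * e + 4 * c * d * f + 16 * e * f
      = (1/5) * (5*(a+b) + 2*c*e)^2 + (1/5) * (5*(b+d) + 2*c*f)^2
        + (1/5) * (2*c*a + 5*(e+f))^2 + 2*c * ((a+b) - (e+f))^2
        + (3 - 2*c) * (a+b)^2 + 3 * (b+d)^2 + (3 - 2*c) * (e+f)^2
        + (c^2/5) * (a^2 + e^2 + f^2) + c^2 * d^2 := by ring
  have hQ : (a+b)^2 + (b+d)^2 + (e+f)^2 + (c^2/5) * (a^2 + e^2 + f^2) + c^2 * d^2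
      ≤ (8 + c ^ 2) * (a ^ 2 + d ^ 2 + e ^ 2 + f ^ 2) + 16 * b ^ 2
      + 16 * a * b + 16 * b * d + 4 * c * a * e + 4 * c * d * f + 16 * e * f := by
    rw [hid]
    have h1 : 0 ≤ (5*(a+b) + 2*c*e)^2 := sq_nonneg _
    have h2 : 0 ≤ (5*(b+d) + 2*c*f)^2 := sq_nonneg _
    have h3 : 0 ≤ (2*c*a + 5*(e+f))^2 := sq_nonneg _
    have h4 : 0 ≤ 2*c * ((a+b) - (e+f))^2 := by positivity
    have h5 : 0 ≤ (2 - 2*c) * (a+b)^2 :=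
      mul_nonneg (by linarith) (sq_nonneg _)
    have h6 : 0 ≤ (2 - 2*c) * (e+f)^2 :=
      mul_nonneg (by linarith) (sq_nonneg _)
    nlinarith [h1, h2, h3, h4, h5, h6]
  have hcc : 0 < c^2 := by positivity
  rcases hne with h | h | h | h | h <;> have hp := sq_pos _ h
  · nlinarith [hQ, mul_pos hcc hp, sq_nonneg (b+d), sq_nonneg (e+f), sq_nonneg (a+b)]
  · have hb2 : b^2 ≤ 2*(a+b)^2 + 2*a^2 := by nlinarith [sq_nonneg ((a+b) + a)]
    have hc2b : 0 < c^2 * b^2 := mul_pos hcc hp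
    have h1c : 0 ≤ (1 - c^2) * (a+b)^2 := mul_nonneg (by nlinarith) (sq_nonneg _)
    nlinarith [hQ, hc2b, h1c, mul_nonneg (mul_nonneg hc0.le hc0.le) (sq_nonneg ((a+b) + a)), sq_nonneg (b+d), sq_nonneg (e+f)]
  · nlinarith [hQ, mul_pos hcc hp, sq_nonneg (b+d), sq_nonneg (e+f), sq_nonneg (a+b)]
  · nlinarith [hQ, mul_pos hcc hp, sq_nonneg (b+d), sq_nonneg (e+f), sq_nonneg (a+b)]
  · nlinarith [hQ, mul_pos hcc hp, sq_nonneg (b+d), sq_nonneg (e+f), sq_nonneg (a+b)]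

/-- For every real `0 < c < 1`, the 5 × 5 real symmetric matrix
`[[8+c²,8,0,2c,0],[8,16,8,0,0],[0,8,8+c²,0,2c],[2c,0,0,8+c²,8],[0,0,2c,8,8+c²]]`
is positive definite. -/
theorem stmt_5 (c : ℝ) (hc0 : 0 < c) (hc1 : c < 1) :
    (!![8 + c ^ 2, 8, 0, 2 * c, 0;
        8, 16, 8, 0, 0;
        0, 8, 8 + c ^ 2, 0, 2 * c;
        2 * c, 0, 0, 8 + c ^ 2, 8;
        0, 0, 2 * c, 8, 8 + c ^ 2] : Matrix (Fin 5) (Fin 5) ℝ).PosDef := by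
  refine Matrix.posDef_iff_dotProduct_mulVec.mpr ⟨?_, ?_⟩
  · ext i j
    fin_cases i <;> fin_cases j <;>
      simp [Matrix.conjTranspose_apply, Matrix.vecHead, Matrix.vecTail]
  · intro x hx
    have hne : x 0 ≠ 0 ∨ x 1 ≠ 0 ∨ x 2 ≠ 0 ∨ x 3 ≠ 0 ∨ x 4 ≠ 0 := by
      by_contra hcon
      push_neg at hcon
      apply hx
      ext i
      fin_cases i <;> simp [hcon.1, hcon.2.1, hcon.2.2.1, hcon.2.2.2.1, hcon.2.2.2.2]
    have key := quad_pos c (x 0) (x 1) (x 2) (x 3) (x 4) hc0 hc1 hne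
    simp only [Matrix.mulVec, dotProduct, Fin.sum_univ_five,
      Matrix.cons_val', Matrix.cons_val_zero, Matrix.cons_val_one, Matrix.head_cons,
      Matrix.empty_val', Matrix.cons_val_fin_one, Matrix.head_fin_const,
      Matrix.cons_val_two, Matrix.tail_cons, Matrix.cons_val_three, Matrix.cons_val_four,
      Matrix.of_apply, Pi.star_apply, star_trivial]
    ring_nf
    ring_nf at key
    linarith [key]
end

section
/- For every real number c with 0 < c < 1, the 5 × 5 real symmetric matrix [[8+c,8,0,0,2c],[8,16,8,0,0],[0,8,8+c,2c,0],[0,0,2c,2c+c²,2c],[2c,0,0,2c,2c+c²]] is positive definite. -/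
/-- For every real `0 < c < 1`, the 5 × 5 real symmetric matrix
`[[8+c,8,0,0,2c],[8,16,8,0,0],[0,8,8+c,2c,0],[0,0,2c,2c+c²,2c],[2c,0,0,2c,2c+c²]]`
is positive definite. -/
theorem stmt_6 (c : ℝ) (hc0 : 0 < c) (hc1 : c < 1) :
    (!![8 + c, 8, 0, 0, 2 * c;
        8, 16, 8, 0, 0;
        0, 8, 8 + c, 2 * c, 0;
        0, 0, 2 * c, 2 * c + c ^ 2, 2 * c;
        2 * c, 0, 0, 2 * c, 2 * c + c ^ 2] : Matrix (Fin 5) (Fin 5) ℝ).PosDef := by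
  have h8 : (0:ℝ) < 8 + c := by linarith
  have h4 : (0:ℝ) < 4 + c := by linarith
  have h6 : (0:ℝ) < 6 + c := by linarith
  rw [Matrix.posDef_iff_dotProduct_mulVec]
  constructor
  · ext i j
    fin_cases i <;> fin_cases j <;>
      simp [Matrix.conjTranspose_apply, Matrix.vecHead, Matrix.vecTail]
  · intro x hx
    set x0 := x 0; set x1 := x 1; set x2 := x 2; set x3 := x 3; set x4 := x 4
    have hQ : dotProduct (star x)
        ((!![8 + c, 8, 0, 0, 2 * c;
            8, 16, 8, 0, 0;
            0, 8, 8 + c, 2 * c, 0;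
            0, 0, 2 * c, 2 * c + c ^ 2, 2 * c;
            2 * c, 0, 0, 2 * c, 2 * c + c ^ 2] : Matrix (Fin 5) (Fin 5) ℝ).mulVec x) =
        (8+c)*x0*x0 + 16*x1*x1 + (8+c)*x2*x2 + (2*c+c^2)*x3*x3 + (2*c+c^2)*x4*x4
        + 16*x0*x1 + 16*x1*x2 + 4*c*x2*x3 + 4*c*x3*x4 + 4*c*x0*x4 := by
      simp [dotProduct, Matrix.mulVec, Fin.sum_univ_five, Matrix.vecHead, Matrix.vecTail]
      ring
    rw [hQ]
    set Q := (8+c)*x0*x0 + 16*x1*x1 + (8+c)*x2*x2 + (2*c+c^2)*x3*x3 + (2*c+c^2)*x4*x4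
        + 16*x0*x1 + 16*x1*x2 + 4*c*x2*x3 + 4*c*x3*x4 + 4*c*x0*x4 with hQdef
    set z0 := (8+c)*x0 + 8*x1 + 2*c*x4 with hz0
    set z1 := 2*(4+c)*x1 + (8+c)*x2 - 2*c*x4 with hz1
    set z2 := (8+c)*x2 + 2*(4+c)*x3 + 8*x4 with hz2
    set z3 := (6+c)*x3 + 2*x4 with hz3
    have key : Q * ((8+c)*(4+c)*(6+c)) =
        (4+c)*(6+c)*z0^2 + 4*(6+c)*z1^2 + c*(6+c)*z2^2 + c^2*(4+c)*z3^2
        + c^2*(4+c)^2*(8+c)*x4^2 := by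
      rw [hQdef, hz0, hz1, hz2, hz3]; ring
    have hP : (0:ℝ) < (8+c)*(4+c)*(6+c) := by positivity
    rcases lt_or_ge 0 Q with h | h
    · exact h
    · exfalso
      have hsum : (4+c)*(6+c)*z0^2 + 4*(6+c)*z1^2 + c*(6+c)*z2^2 + c^2*(4+c)*z3^2
          + c^2*(4+c)^2*(8+c)*x4^2 ≤ 0 := by
        rw [← key]
        exact mul_nonpos_of_nonpos_of_nonneg h hP.le
      have t0 : (0:ℝ) ≤ (4+c)*(6+c)*z0^2 := by positivity
      have t1 : (0:ℝ) ≤ 4*(6+c)*z1^2 := by positivity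
      have t2 : (0:ℝ) ≤ c*(6+c)*z2^2 := by positivity
      have t3 : (0:ℝ) ≤ c^2*(4+c)*z3^2 := by positivity
      have t4 : (0:ℝ) ≤ c^2*(4+c)^2*(8+c)*x4^2 := by positivity
      have hx4 : x4 = 0 := by
        have hK : (0:ℝ) < c^2*(4+c)^2*(8+c) := by positivity
        have h0 : c^2*(4+c)^2*(8+c)*x4^2 = 0 := le_antisymm (by linarith) t4
        have h1 : x4^2 = 0 := (mul_eq_zero.mp h0).resolve_left hK.ne'
        exact pow_eq_zero_iff two_ne_zero |>.mp h1
      have hz3' : z3 = 0 := by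
        have hK : (0:ℝ) < c^2*(4+c) := by positivity
        have h0 : c^2*(4+c)*z3^2 = 0 := le_antisymm (by linarith) t3
        have h1 : z3^2 = 0 := (mul_eq_zero.mp h0).resolve_left hK.ne'
        exact pow_eq_zero_iff two_ne_zero |>.mp h1
      have hx3 : x3 = 0 := by
        rw [hz3, hx4] at hz3'
        have h0 : (6+c)*x3 = 0 := by linarith
        exact (mul_eq_zero.mp h0).resolve_left h6.ne'
      have hz2' : z2 = 0 := by
        have hK : (0:ℝ) < c*(6+c) := by positivity
        have h0 : c*(6+c)*z2^2 = 0 := le_antisymm (by linarith) t2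
        have h1 : z2^2 = 0 := (mul_eq_zero.mp h0).resolve_left hK.ne'
        exact pow_eq_zero_iff two_ne_zero |>.mp h1
      have hx2 : x2 = 0 := by
        rw [hz2, hx3, hx4] at hz2'
        have h0 : (8+c)*x2 = 0 := by linarith
        exact (mul_eq_zero.mp h0).resolve_left h8.ne'
      have hz1' : z1 = 0 := by
        have hK : (0:ℝ) < 4*(6+c) := by positivity
        have h0 : 4*(6+c)*z1^2 = 0 := le_antisymm (by linarith) t1
        have h1 : z1^2 = 0 := (mul_eq_zero.mp h0).resolve_left hK.ne'
        exact pow_eq_zero_iff two_ne_zero |>.mp h1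
      have hx1 : x1 = 0 := by
        rw [hz1, hx2, hx4] at hz1'
        have h0 : 2*(4+c)*x1 = 0 := by linarith
        have h4' : (0:ℝ) < 2*(4+c) := by linarith
        exact (mul_eq_zero.mp h0).resolve_left h4'.ne'
      have hz0' : z0 = 0 := by
        have hK : (0:ℝ) < (4+c)*(6+c) := by positivity
        have h0 : (4+c)*(6+c)*z0^2 = 0 := le_antisymm (by linarith) t0
        have h1 : z0^2 = 0 := (mul_eq_zero.mp h0).resolve_left hK.ne'
        exact pow_eq_zero_iff two_ne_zero |>.mp h1
      have hx0 : x0 = 0 := by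
        rw [hz0, hx1, hx4] at hz0'
        have h0 : (8+c)*x0 = 0 := by linarith
        exact (mul_eq_zero.mp h0).resolve_left h8.ne'
      apply hx
      funext i
      fin_cases i
      exacts [hx0, hx1, hx2, hx3, hx4]
end

section
/- Let k ≥ 2 be an integer, let c be a real number with 0 < c < 1, and let p₁, p₄, p₅ be real numbers with p₁ > c/k, p₅ > c/k and p₄ ≥ (k−1)c/k. Then c²(p₁² − p₁ + p₄² − p₄ + 2p₅² − 2p₅) + 2kc(p₁p₅ + p₄p₅) > 0. -/
/-!
Multiplying out, the expression equals `c` times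
`c (p₁² + p₄² + 2p₅²) + (p₁ + p₄)(k p₅ - c) + p₅ (k (p₁ + p₄) - 2c)`.
The hypotheses give `k p₅ > c` and `k (p₁ + p₄) > k c ≥ 2c`, so all three summands are
nonnegative and the last two are positive.
-/

lemma expr_eq_mul_sum (k c p1 p4 p5 : ℝ) :
    c ^ 2 * (p1 ^ 2 - p1 + p4 ^ 2 - p4 + 2 * p5 ^ 2 - 2 * p5) + 2 * k * c * (p1 * p5 + p4 * p5)
      = c * (c * (p1 ^ 2 + p4 ^ 2 + 2 * p5 ^ 2) + (p1 + p4) * (k * p5 - c)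
          + p5 * (k * (p1 + p4) - 2 * c)) := by
  ring

theorem expr_pos_of_two_le {k c p1 p4 p5 : ℝ} (hk : 2 ≤ k) (hc : 0 < c)
    (h1 : c / k < p1) (h5 : c / k < p5) (h4 : (k - 1) * c / k ≤ p4) :
    0 < c ^ 2 * (p1 ^ 2 - p1 + p4 ^ 2 - p4 + 2 * p5 ^ 2 - 2 * p5)
      + 2 * k * c * (p1 * p5 + p4 * p5) := by
  have hk0 : 0 < k := by linarith
  have hp1 : c < k * p1 := (div_lt_iff₀' hk0).1 h1
  have hp5 : c < k * p5 := (div_lt_iff₀' hk0).1 h5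
  have hp4 : (k - 1) * c ≤ k * p4 := (div_le_iff₀' hk0).1 h4
  have hp5_pos : 0 < p5 := (div_pos hc hk0).trans h5
  have hks : k * c < k * (p1 + p4) := by linarith
  have hs_pos : 0 < p1 + p4 := hc.trans (lt_of_mul_lt_mul_left hks hk0.le)
  have hs_gt : 2 * c < k * (p1 + p4) := (mul_le_mul_of_nonneg_right hk hc.le).trans_lt hks
  rw [expr_eq_mul_sum]
  have hsq : 0 ≤ c * (p1 ^ 2 + p4 ^ 2 + 2 * p5 ^ 2) := by positivity
  have hmid : 0 < (p1 + p4) * (k * p5 - c) := mul_pos hs_pos (by linarith)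
  have hlast : 0 < p5 * (k * (p1 + p4) - 2 * c) := mul_pos hp5_pos (by linarith)
  exact mul_pos hc (by linarith)

theorem stmt_7_general (k : ℕ) (hk : 2 ≤ k) (c p1 p4 p5 : ℝ)
    (hc0 : 0 < c)
    (h1 : p1 > c / k) (h5 : p5 > c / k) (h4 : p4 ≥ ((k : ℝ) - 1) * c / k) :
    c ^ 2 * (p1 ^ 2 - p1 + p4 ^ 2 - p4 + 2 * p5 ^ 2 - 2 * p5)
      + 2 * k * c * (p1 * p5 + p4 * p5) > 0 :=
  expr_pos_of_two_le (by exact_mod_cast hk) hc0 h1 h5 h4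

/-- Let `k ≥ 2` be an integer, `0 < c < 1` real, and `p₁, p₄, p₅` real
with `p₁ > c/k`, `p₅ > c/k` and `p₄ ≥ (k−1)c/k`. Then
`c²(p₁² − p₁ + p₄² − p₄ + 2p₅² − 2p₅) + 2kc(p₁p₅ + p₄p₅) > 0`. -/
theorem stmt_7 (k : ℕ) (hk : 2 ≤ k) (c p1 p4 p5 : ℝ)
    (hc0 : 0 < c) (hc1 : c < 1)
    (h1 : p1 > c / k) (h5 : p5 > c / k) (h4 : p4 ≥ ((k : ℝ) - 1) * c / k) :
    c ^ 2 * (p1 ^ 2 - p1 + p4 ^ 2 - p4 + 2 * p5 ^ 2 - 2 * p5)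
      + 2 * k * c * (p1 * p5 + p4 * p5) > 0 :=
  stmt_7_general k hk c p1 p4 p5 hc0 h1 h5 h4
end

section
/- Let V be a complex vector space, ψ ∈ V, and let A₁, A₂, B : V → V be linear maps satisfying A₁∘A₁ = id, A₂∘A₂ = id, B∘B = id, A₁∘B = B∘A₁ and A₂∘B = B∘A₂. Let a, b be real numbers with sin a ≠ 0, sin b ≠ 0 and sin(a+b) ≠ 0, and suppose sin(a+b)·(Bψ) = sin a·(A₂ψ) + sin b·(A₁ψ). Then (A₁∘A₂ + A₂∘A₁)ψ = 2cos(a+b)·ψ. -/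
/-!
Put `L := sin a • A₂ + sin b • A₁`. Since `A₁, A₂` are involutions,
`L² = sin² a + sin² b + sin a sin b (A₁A₂ + A₂A₁)`. On the other hand the hypothesis reads
`Lψ = sin (a + b) • Bψ`, and `L` commutes with the involution `B`, so
`L²ψ = sin (a + b) • B (Lψ) = sin² (a + b) • ψ`. Comparing the two and using
`sin² (a + b) - sin² a - sin² b = 2 sin a sin b cos (a + b)`, the factor `sin a sin b ≠ 0`
cancels.
-/

theorem Real.sin_add_sq_sub_sin_sq_sub_sin_sq (a b : ℝ) :
    Real.sin (a + b) ^ 2 - Real.sin a ^ 2 - Real.sin b ^ 2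
      = 2 * Real.sin a * Real.sin b * Real.cos (a + b) := by
  rw [Real.sin_add, Real.cos_add]
  nlinarith [Real.sin_sq_add_cos_sq a, Real.sin_sq_add_cos_sq b]

theorem smul_add_smul_mul_self_of_mul_self_eq_one {R A : Type*} [CommSemiring R] [Semiring A]
    [Algebra R A] {x y : A} (hx : x * x = 1) (hy : y * y = 1) (s t : R) :
    (s • y + t • x) * (s • y + t • x) = (s ^ 2 + t ^ 2) • (1 : A) + (s * t) • (x * y + y * x) := by
  simp only [add_mul, mul_add, smul_mul_smul, hx, hy]
  module

theorem Module.End.apply_apply_eq_smul_of_smul_apply_eq {R V : Type*} [CommSemiring R]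
    [AddCommMonoid V] [Module R V] {L B : Module.End R V} (hLB : Commute L B) (hB : B * B = 1)
    {u : R} {ψ : V} (h : u • B ψ = L ψ) : L (L ψ) = u ^ 2 • ψ := by
  have hBB : B (B ψ) = ψ := by rw [← Module.End.mul_apply, hB, Module.End.one_apply]
  calc L (L ψ) = L (u • B ψ) := congrArg L h.symm
    _ = u • B (L ψ) := by rw [map_smul, ← Module.End.mul_apply, hLB.eq, Module.End.mul_apply]
    _ = u • B (u • B ψ) := by rw [h]
    _ = u ^ 2 • ψ := by rw [map_smul, hBB, smul_smul, sq]

theorem Module.End.smul_anticommutator_apply_eq {R V : Type*} [CommRing R] [AddCommGroup V]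
    [Module R V] {A₁ A₂ B : Module.End R V} (hA₁ : A₁ * A₁ = 1) (hA₂ : A₂ * A₂ = 1)
    (hB : B * B = 1) (hc₁ : Commute A₁ B) (hc₂ : Commute A₂ B) {s t u : R} {ψ : V}
    (h : u • B ψ = s • A₂ ψ + t • A₁ ψ) :
    (s * t) • (A₁ * A₂ + A₂ * A₁) ψ = (u ^ 2 - s ^ 2 - t ^ 2) • ψ := by
  set L := s • A₂ + t • A₁
  have hLB : Commute L B := (hc₂.smul_left s).add_left (hc₁.smul_left t)
  have hL := Module.End.apply_apply_eq_smul_of_smul_apply_eq hLB hB h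
  rw [← Module.End.mul_apply, smul_add_smul_mul_self_of_mul_self_eq_one hA₁ hA₂] at hL
  simp only [LinearMap.add_apply, LinearMap.smul_apply, Module.End.one_apply] at hL
  rw [sub_sub, sub_smul, ← hL, LinearMap.add_apply]
  module

theorem stmt_10_general (V : Type*) [AddCommGroup V] [Module ℂ V] (ψ : V)
    (A₁ A₂ B : V →ₗ[ℂ] V)
    (hA₁ : A₁ ∘ₗ A₁ = LinearMap.id) (hA₂ : A₂ ∘ₗ A₂ = LinearMap.id)
    (hB : B ∘ₗ B = LinearMap.id)
    (hc₁ : A₁ ∘ₗ B = B ∘ₗ A₁) (hc₂ : A₂ ∘ₗ B = B ∘ₗ A₂)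
    (a b : ℝ) (ha : Real.sin a ≠ 0) (hb : Real.sin b ≠ 0)
    (hrel : (Real.sin (a + b) : ℂ) • B ψ
      = (Real.sin a : ℂ) • A₂ ψ + (Real.sin b : ℂ) • A₁ ψ) :
    (A₁ ∘ₗ A₂ + A₂ ∘ₗ A₁) ψ = (2 * Real.cos (a + b) : ℂ) • ψ := by
  have key := Module.End.smul_anticommutator_apply_eq hA₁ hA₂ hB hc₁ hc₂ hrel
  have htrig : ((Real.sin (a + b) : ℂ) ^ 2 - (Real.sin a : ℂ) ^ 2 - (Real.sin b : ℂ) ^ 2)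
      = (Real.sin a * Real.sin b : ℂ) * (2 * Real.cos (a + b)) := by
    exact_mod_cast (Real.sin_add_sq_sub_sin_sq_sub_sin_sq a b).trans (by ring)
  have hsab : (Real.sin a * Real.sin b : ℂ) ≠ 0 := by exact_mod_cast mul_ne_zero ha hb
  exact smul_right_injective V hsab (key.trans (by rw [htrig, mul_smul]))

/-- Let `V` be a complex vector space, `ψ ∈ V`, and let
`A₁, A₂, B : V → V` be linear maps with `A₁² = A₂² = B² = id`, `A₁B = BA₁` and
`A₂B = BA₂`. Let `a, b` be reals with `sin a ≠ 0`, `sin b ≠ 0`, `sin(a+b) ≠ 0`, and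
suppose `sin(a+b)·(Bψ) = sin a·(A₂ψ) + sin b·(A₁ψ)`. Then
`(A₁A₂ + A₂A₁)ψ = 2cos(a+b)·ψ`. -/
theorem stmt_10 (V : Type*) [AddCommGroup V] [Module ℂ V] (ψ : V)
    (A₁ A₂ B : V →ₗ[ℂ] V)
    (hA₁ : A₁ ∘ₗ A₁ = LinearMap.id) (hA₂ : A₂ ∘ₗ A₂ = LinearMap.id)
    (hB : B ∘ₗ B = LinearMap.id)
    (hc₁ : A₁ ∘ₗ B = B ∘ₗ A₁) (hc₂ : A₂ ∘ₗ B = B ∘ₗ A₂)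
    (a b : ℝ) (ha : Real.sin a ≠ 0) (hb : Real.sin b ≠ 0)
    (hab : Real.sin (a + b) ≠ 0)
    (hrel : (Real.sin (a + b) : ℂ) • B ψ
      = (Real.sin a : ℂ) • A₂ ψ + (Real.sin b : ℂ) • A₁ ψ) :
    (A₁ ∘ₗ A₂ + A₂ ∘ₗ A₁) ψ = (2 * Real.cos (a + b) : ℂ) • ψ :=
  stmt_10_general V ψ A₁ A₂ B hA₁ hA₂ hB hc₁ hc₂ a b ha hb hrel
end

section
/- Let x, y, z be nonzero vectors in a real inner product space such that angle(x,z) = angle(x,y) + angle(y,z). Then there exists a subspace S of the space with dim S ≤ 2 such that x, y, z ∈ S. -/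
open InnerProductGeometry Real RealInnerProductSpace

lemma span_pair_rank_le {E : Type*} [NormedAddCommGroup E] [InnerProductSpace ℝ E]
    (a b : E) : Module.rank ℝ (Submodule.span ℝ ({a, b} : Set E)) ≤ 2 := by
  refine (rank_span_le _).trans ?_
  have : ({a, b} : Set E) = insert a {b} := rfl
  rw [this]
  refine (Cardinal.mk_insert_le).trans ?_
  simp
  norm_num

lemma key {E : Type*} [NormedAddCommGroup E] [InnerProductSpace ℝ E]
    (u v w : E) (hu : ‖u‖ = 1) (hv : ‖v‖ = 1) (hw : ‖w‖ = 1)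
    (h : angle u w = angle u v + angle v w) :
    ∃ S : Submodule ℝ E, Module.rank ℝ S ≤ 2 ∧ u ∈ S ∧ v ∈ S ∧ w ∈ S := by
  set a : ℝ := ⟪u, v⟫ with ha
  set c : ℝ := ⟪v, w⟫ with hc
  have hav : angle u v = Real.arccos a := by
    rw [angle, hu, hv]; norm_num; rfl
  have hcv : angle v w = Real.arccos c := by
    rw [angle, hv, hw]; norm_num; rfl
  have ha1 : a ∈ Set.Icc (-1:ℝ) 1 := by
    constructor
    · have := neg_le_of_abs_le (abs_real_inner_le_norm u v)
      simpa [hu, hv] using this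
    · have := le_of_abs_le (abs_real_inner_le_norm u v)
      simpa [hu, hv] using this
  have hc1 : c ∈ Set.Icc (-1:ℝ) 1 := by
    constructor
    · have := neg_le_of_abs_le (abs_real_inner_le_norm v w)
      simpa [hv, hw] using this
    · have := le_of_abs_le (abs_real_inner_le_norm v w)
      simpa [hv, hw] using this
  have hcos : ⟪u, w⟫ = a * c - Real.sqrt (1 - a^2) * Real.sqrt (1 - c^2) := by
    have h1 : Real.cos (angle u w) = ⟪u, w⟫ := by
      rw [cos_angle, hu, hw]; norm_num
    rw [← h1, h, hav, hcv, Real.cos_add, Real.cos_arccos ha1.1 ha1.2,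
      Real.cos_arccos hc1.1 hc1.2, Real.sin_arccos, Real.sin_arccos]
  set u' := u - a • v with hu'
  set w' := w - c • v with hw'
  have hvv : ⟪v, v⟫ = 1 := by
    rw [real_inner_self_eq_norm_mul_norm, hv]; norm_num
  have hvu : ⟪v, u⟫ = a := by rw [ha]; exact (real_inner_comm v u).symm
  have hwv : ⟪w, v⟫ = c := by rw [hc]; exact (real_inner_comm w v).symm
  have hqu : ⟪u', u'⟫ = 1 - a^2 := by
    simp only [hu', inner_sub_left, inner_sub_right, real_inner_smul_left,
      real_inner_smul_right, hvv]
    have : ⟪u, u⟫ = 1 := by rw [real_inner_self_eq_norm_mul_norm, hu]; norm_num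
    rw [this, hvu]; ring
  have hqw : ⟪w', w'⟫ = 1 - c^2 := by
    simp only [hw', inner_sub_left, inner_sub_right, real_inner_smul_left,
      real_inner_smul_right, hvv]
    have : ⟪w, w⟫ = 1 := by rw [real_inner_self_eq_norm_mul_norm, hw]; norm_num
    rw [this, hwv]; ring
  have hnu : ‖u'‖ = Real.sqrt (1 - a^2) := by
    rw [← Real.sqrt_mul_self (norm_nonneg u'), ← real_inner_self_eq_norm_mul_norm, hqu]
  have hnw : ‖w'‖ = Real.sqrt (1 - c^2) := by
    rw [← Real.sqrt_mul_self (norm_nonneg w'), ← real_inner_self_eq_norm_mul_norm, hqw]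
  have hinner : ⟪u', w'⟫ = -(‖u'‖ * ‖w'‖) := by
    have huw' : ⟪u', w'⟫ = ⟪u, w⟫ - a * c := by
      simp only [hu', hw', inner_sub_left, inner_sub_right, real_inner_smul_left,
        real_inner_smul_right, hvv]
      rw [← ha, ← hc]; ring
    rw [huw', hcos, hnu, hnw]; ring
  by_cases hz : u' = 0
  · -- u = a • v, use span {v, w}
    refine ⟨Submodule.span ℝ ({v, w} : Set E), span_pair_rank_le v w, ?_, ?_, ?_⟩
    · have : u = a • v := by rwa [hu', sub_eq_zero] at hz
      rw [this]
      exact Submodule.smul_mem _ _ (Submodule.subset_span (by simp))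
    · exact Submodule.subset_span (by simp)
    · exact Submodule.subset_span (by simp)
  · -- equality in Cauchy–Schwarz: ‖-w'‖ • u' = ‖u'‖ • (-w')
    have heq : ‖-w'‖ • u' = ‖u'‖ • (-w') := by
      rw [← inner_eq_norm_mul_iff_real]
      rw [inner_neg_right, hinner, norm_neg]; ring
    have hn : (‖u'‖ : ℝ) ≠ 0 := norm_ne_zero_iff.mpr hz
    rw [norm_neg] at heq
    have h2 : ‖u'‖ • w' = (-‖w'‖) • u' := by
      rw [neg_smul, heq, smul_neg, neg_neg]
    have hwval : w' = ((‖u'‖)⁻¹ * (-‖w'‖)) • u' := by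
      have h4 := congrArg (fun t => (‖u'‖)⁻¹ • t) h2
      simpa [smul_smul, inv_mul_cancel₀ hn] using h4
    refine ⟨Submodule.span ℝ ({u, v} : Set E), span_pair_rank_le u v, ?_, ?_, ?_⟩
    · exact Submodule.subset_span (by simp)
    · exact Submodule.subset_span (by simp)
    · have hu'' : u' ∈ Submodule.span ℝ ({u, v} : Set E) := by
        rw [hu']
        exact Submodule.sub_mem _ (Submodule.subset_span (by simp))
          (Submodule.smul_mem _ _ (Submodule.subset_span (by simp)))
      have : w = c • v + w' := by rw [hw']; abel
      rw [this]
      refine Submodule.add_mem _ (Submodule.smul_mem _ _ (Submodule.subset_span (by simp))) ?_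
      rw [hwval]
      exact Submodule.smul_mem _ _ hu''

/-- Let `x, y, z` be nonzero vectors in a real inner product space such that
`angle(x,z) = angle(x,y) + angle(y,z)`. Then there exists a subspace `S` of the space
with `dim S ≤ 2` such that `x, y, z ∈ S`. -/
theorem stmt_12 {E : Type*} [NormedAddCommGroup E] [InnerProductSpace ℝ E]
    (x y z : E) (hx : x ≠ 0) (hy : y ≠ 0) (hz : z ≠ 0)
    (h : InnerProductGeometry.angle x z
      = InnerProductGeometry.angle x y + InnerProductGeometry.angle y z) :
    ∃ S : Submodule ℝ E, Module.rank ℝ S ≤ 2 ∧ x ∈ S ∧ y ∈ S ∧ z ∈ S := by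
  have hnx : (0:ℝ) < ‖x‖⁻¹ := inv_pos.mpr (norm_pos_iff.mpr hx)
  have hny : (0:ℝ) < ‖y‖⁻¹ := inv_pos.mpr (norm_pos_iff.mpr hy)
  have hnz : (0:ℝ) < ‖z‖⁻¹ := inv_pos.mpr (norm_pos_iff.mpr hz)
  set u := ‖x‖⁻¹ • x with hu
  set v := ‖y‖⁻¹ • y with hv
  set w := ‖z‖⁻¹ • z with hw
  have hnu : ‖u‖ = 1 := norm_smul_inv_norm hx
  have hnv : ‖v‖ = 1 := norm_smul_inv_norm hy
  have hnw : ‖w‖ = 1 := norm_smul_inv_norm hz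
  have hang : angle u w = angle u v + angle v w := by
    rw [hu, hv, hw, angle_smul_left_of_pos _ _ hnx, angle_smul_right_of_pos _ _ hnz,
      angle_smul_left_of_pos _ _ hnx, angle_smul_right_of_pos _ _ hny,
      angle_smul_left_of_pos _ _ hny, angle_smul_right_of_pos _ _ hnz]
    exact h
  obtain ⟨S, hS, hus, hvs, hws⟩ := key u v w hnu hnv hnw hang
  refine ⟨S, hS, ?_, ?_, ?_⟩
  · have : x = ‖x‖ • u := by rw [hu, smul_smul, mul_inv_cancel₀ (by simpa using hx), one_smul]
    rw [this]; exact S.smul_mem _ hus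
  · have : y = ‖y‖ • v := by rw [hv, smul_smul, mul_inv_cancel₀ (by simpa using hy), one_smul]
    rw [this]; exact S.smul_mem _ hvs
  · have : z = ‖z‖ • w := by rw [hw, smul_smul, mul_inv_cancel₀ (by simpa using hz), one_smul]
    rw [this]; exact S.smul_mem _ hws
end

section
/- Let m ≥ 2 and let a₁,…,a_m, b₁,…,b_m be unit vectors in a real inner product space such that Σ_{i=1}^{m−1} (angle(a_i,b_i) + angle(a_{i+1},b_i)) + angle(a_m,b_m) = angle(a₁,b_m). Then there exists a subspace S of the space with dim S ≤ 2 such that a_i ∈ S and b_i ∈ S for all i = 1,…,m. -/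
/-!
By the triangle inequality for angles, when the angles along the path `v 0, v 1, …, v n` add
up to `angle (v 0) (v n)`, every triangle inequality `∠(v i, v l) ≤ ∠(v i, v k) + ∠(v k, v l)`
with `i ≤ k ≤ l ≤ n` is an equality. In the equality case `v k` is a nonnegative combination of
`v i` and `v l` unless these two are antipodal. So if the endpoints are not antipodal, the whole
path lies in their span. If they are, a vector `v j` making an angle strictly between `0` and `π`
with `v 0` cuts the path into two halves with non-antipodal endpoints, both contained in the plane
of `v 0` and `v j`; if there is no such `v j`, the path lies on the line through `v 0`.
Interleaving the `a i` and `b i` into one path `a₁, b₁, a₂, b₂, …, a_m, b_m` gives the theorem.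
-/

open InnerProductGeometry Finset Submodule Real

theorem Finset.sum_range_two_mul {M : Type*} [AddCommMonoid M] (f : ℕ → M) (n : ℕ) :
    ∑ i ∈ range (2 * n), f i = ∑ i ∈ range n, (f (2 * i) + f (2 * i + 1)) := by
  induction n with
  | zero => simp
  | succ n ih => rw [Nat.mul_succ, sum_range_succ, sum_range_succ, sum_range_succ, ih, add_assoc]

def interleave {α : Type*} (a b : ℕ → α) (k : ℕ) : α :=
  if Even k then a (k / 2) else b (k / 2)

@[simp]
theorem interleave_two_mul {α : Type*} (a b : ℕ → α) (t : ℕ) : interleave a b (2 * t) = a t := by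
  simp [interleave]

@[simp]
theorem interleave_two_mul_add_one {α : Type*} (a b : ℕ → α) (t : ℕ) :
    interleave a b (2 * t + 1) = b t := by
  simp [interleave, Nat.mul_add_div]

@[simp]
theorem interleave_zero {α : Type*} (a b : ℕ → α) : interleave a b 0 = a 0 :=
  interleave_two_mul a b 0

theorem Submodule.rank_span_pair_le {R M : Type*} [Ring R] [StrongRankCondition R]
    [AddCommGroup M] [Module R M] (x y : M) : Module.rank R (span R {x, y}) ≤ 2 :=
  (rank_span_le _).trans <| Cardinal.mk_insert_le.trans <| by simp [one_add_one_eq_two]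

namespace InnerProductGeometry

variable {E : Type*} [NormedAddCommGroup E] [InnerProductSpace ℝ E]

theorem mem_span_pair_of_angle_eq_angle_add_angle {x y z : E} (hy : y ≠ 0)
    (hxz : angle x z ≠ π) (h : angle x z = angle x y + angle y z) :
    y ∈ span ℝ {x, z} :=
  span_le_restrictScalars NNReal ℝ _ <|
    ((angle_eq_angle_add_angle_iff hy).1 h).resolve_left hxz

theorem mem_span_singleton_of_angle_eq_zero_or_pi {x y : E}
    (h : angle x y = 0 ∨ angle x y = π) : y ∈ span ℝ {x} := by
  obtain ⟨-, r, -, rfl⟩ | ⟨-, r, -, rfl⟩ := h.imp angle_eq_zero_iff.1 angle_eq_pi_iff.1 <;>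
    exact smul_mem _ r (mem_span_singleton_self x)

theorem angle_le_sum_angle (v : ℕ → E) {j k : ℕ} (hj : v j ≠ 0) (hjk : j ≤ k) :
    angle (v j) (v k) ≤ ∑ i ∈ Ico j k, angle (v i) (v (i + 1)) := by
  induction k, hjk using Nat.le_induction with
  | base => simp [angle_self hj]
  | succ k hjk ih =>
    rw [sum_Ico_succ_top hjk]
    linarith [angle_le_angle_add_angle (v j) (v k) (v (k + 1))]

theorem angle_eq_angle_add_angle_of_sum_angle_eq {v : ℕ → E} {n : ℕ} (hv : ∀ k ≤ n, v k ≠ 0)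
    (hsum : ∑ i ∈ range n, angle (v i) (v (i + 1)) = angle (v 0) (v n))
    {i k l : ℕ} (hik : i ≤ k) (hkl : k ≤ l) (hln : l ≤ n) :
    angle (v i) (v l) = angle (v i) (v k) + angle (v k) (v l) := by
  have h0i := angle_le_sum_angle v (hv 0 (Nat.zero_le n)) (Nat.zero_le i)
  have hik' := angle_le_sum_angle v (hv i (by omega)) hik
  have hkl' := angle_le_sum_angle v (hv k (by omega)) hkl
  have hln' := angle_le_sum_angle v (hv l hln) hln
  rw [range_eq_Ico, ← sum_Ico_consecutive _ (Nat.zero_le i) (hik.trans (hkl.trans hln)),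
    ← sum_Ico_consecutive _ hik (hkl.trans hln), ← sum_Ico_consecutive _ hkl hln] at hsum
  linarith [angle_le_angle_add_angle (v 0) (v i) (v l),
    angle_le_angle_add_angle (v 0) (v l) (v n), angle_le_angle_add_angle (v i) (v k) (v l)]

theorem exists_mem_span_pair_of_sum_angle_eq {v : ℕ → E} {n : ℕ} (hv : ∀ k ≤ n, v k ≠ 0)
    (hsum : ∑ i ∈ range n, angle (v i) (v (i + 1)) = angle (v 0) (v n)) :
    ∃ x y : E, ∀ k ≤ n, v k ∈ span ℝ {x, y} := by
  have hsplit {i k l : ℕ} (hik : i ≤ k) (hkl : k ≤ l) (hln : l ≤ n) :=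
    angle_eq_angle_add_angle_of_sum_angle_eq hv hsum hik hkl hln
  have mem {i k l : ℕ} (hik : i ≤ k) (hkl : k ≤ l) (hln : l ≤ n) (hil : angle (v i) (v l) ≠ π) :
      v k ∈ span ℝ {v i, v l} :=
    mem_span_pair_of_angle_eq_angle_add_angle (hv k (by omega)) hil (hsplit hik hkl hln)
  rcases ne_or_eq (angle (v 0) (v n)) π with h0n | h0n
  · exact ⟨v 0, v n, fun k hk => mem (Nat.zero_le k) hk le_rfl h0n⟩
  by_cases hj : ∃ j ≤ n, angle (v 0) (v j) ≠ 0 ∧ angle (v 0) (v j) ≠ π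
  · obtain ⟨j, hjn, hj0, hjπ⟩ := hj
    have hjn' : angle (v j) (v n) ≠ π := by
      have := hsplit (Nat.zero_le j) hjn le_rfl
      contrapose! hj0
      linarith
    have hn : v n ∈ span ℝ {v 0, v j} :=
      span_mono (by simp) (mem_span_singleton_of_angle_eq_zero_or_pi (.inr h0n))
    refine ⟨v 0, v j, fun k hk => ?_⟩
    rcases le_total k j with hkj | hjk
    · exact mem (Nat.zero_le k) hkj hjn hjπ
    · refine span_le.2 ?_ (mem hjk hk le_rfl hjn')
      rintro _ (rfl | rfl)
      exacts [subset_span (by simp), hn]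
  · push Not at hj
    refine ⟨v 0, v 0, fun k hk => ?_⟩
    rw [Set.pair_eq_singleton]
    exact mem_span_singleton_of_angle_eq_zero_or_pi (or_iff_not_imp_left.2 (hj k hk))

theorem sum_angle_interleave (a b : ℕ → E) (k : ℕ) :
    ∑ i ∈ range (2 * k + 1), angle (interleave a b i) (interleave a b (i + 1)) =
      ∑ t ∈ range k, (angle (a t) (b t) + angle (a (t + 1)) (b t)) + angle (a k) (b k) := by
  rw [sum_range_succ, sum_range_two_mul]
  simp only [interleave_two_mul, interleave_two_mul_add_one,
    show ∀ t, 2 * t + 1 + 1 = 2 * (t + 1) from fun t => by ring, angle_comm (b _)]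

end InnerProductGeometry

open InnerProductGeometry in
theorem stmt_13_general {E : Type*} [NormedAddCommGroup E] [InnerProductSpace ℝ E]
    (m : ℕ) (a b : ℕ → E)
    (ha : ∀ i ∈ Finset.Icc 1 m, ‖a i‖ = 1)
    (hb : ∀ i ∈ Finset.Icc 1 m, ‖b i‖ = 1)
    (hsum : (∑ i ∈ Finset.Icc 1 (m - 1), (angle (a i) (b i) + angle (a (i + 1)) (b i)))
        + angle (a m) (b m) = angle (a 1) (b m)) :
    ∃ S : Submodule ℝ E, Module.rank ℝ S ≤ 2 ∧
      ∀ i ∈ Finset.Icc 1 m, a i ∈ S ∧ b i ∈ S := by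
  obtain _ | k := m
  · exact ⟨⊥, by simp, by simp⟩
  set w := interleave (fun t => a (t + 1)) (fun t => b (t + 1)) with hw_def
  have hw : ∀ j ≤ 2 * k + 1, w j ≠ 0 := by
    intro j hj
    obtain ⟨t, rfl | rfl⟩ := j.even_or_odd'
    · exact ne_zero_of_norm_ne_zero <| by simp [hw_def, ha (t + 1) (by grind)]
    · exact ne_zero_of_norm_ne_zero <| by simp [hw_def, hb (t + 1) (by grind)]
  have hchain :
      ∑ j ∈ range (2 * k + 1), angle (w j) (w (j + 1)) = angle (w 0) (w (2 * k + 1)) := by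
    rw [hw_def, sum_angle_interleave, interleave_zero, interleave_two_mul_add_one, ← hsum,
      Nat.add_sub_cancel, ← Ico_add_one_right_eq_Icc, sum_Ico_eq_sum_range, Nat.add_sub_cancel]
    simp only [add_comm 1]
  obtain ⟨x, y, hxy⟩ := exists_mem_span_pair_of_sum_angle_eq hw hchain
  refine ⟨span ℝ {x, y}, rank_span_pair_le x y, fun i hi => ?_⟩
  obtain ⟨t, rfl⟩ : ∃ t, i = t + 1 := ⟨i - 1, by grind⟩
  have ht : t ≤ k := by grind
  exact ⟨by simpa [hw_def] using hxy (2 * t) (by omega),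
    by simpa [hw_def] using hxy (2 * t + 1) (by omega)⟩

open InnerProductGeometry in
/-- Let `m ≥ 2` and let `a₁,…,a_m, b₁,…,b_m` be unit vectors in a real
inner product space such that
`Σ_{i=1}^{m−1} (angle(a_i,b_i) + angle(a_{i+1},b_i)) + angle(a_m,b_m) = angle(a₁,b_m)`.
Then there is a subspace `S` with `dim S ≤ 2` containing all the `a_i` and `b_i`. -/
theorem stmt_13 {E : Type*} [NormedAddCommGroup E] [InnerProductSpace ℝ E]
    (m : ℕ) (hm : 2 ≤ m) (a b : ℕ → E)
    (ha : ∀ i ∈ Finset.Icc 1 m, ‖a i‖ = 1)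
    (hb : ∀ i ∈ Finset.Icc 1 m, ‖b i‖ = 1)
    (hsum : (∑ i ∈ Finset.Icc 1 (m - 1), (angle (a i) (b i) + angle (a (i + 1)) (b i)))
        + angle (a m) (b m) = angle (a 1) (b m)) :
    ∃ S : Submodule ℝ E, Module.rank ℝ S ≤ 2 ∧
      ∀ i ∈ Finset.Icc 1 m, a i ∈ S ∧ b i ∈ S :=
  stmt_13_general m a b ha hb hsum
end

section
/- Let k ≥ 4 and set q = 2^{k−2}. Define matrices A_{2^j} and B_{2^j} of size 2^j × 2^j for 0 ≤ j ≤ k−2 recursively by A_1 = (1), B_1 = (−1), A_{2^{j+1}} = [[A_{2^j}, 𝒢_{2^{k−2},2^j}],[𝒢_{2^{k−2},2^j}, A_{2^j}]] and B_{2^{j+1}} = [[𝒢̄_{2^{k−2},2^j}, B_{2^j}],[B_{2^j}, 𝒢̄_{2^{k−2},2^j}]] (in 2×2 block form). Then, writing G = 𝒢_{2^{k−2}}, A = A_{2^{k−2}} and B = B_{2^{k−2}}, the game matrix 𝒢_{2^k} equals the 4×4 block matrix (with blocks of size q × q) [[A,G,G,B],[G,A,B,G],[G,B,A,G],[B,G,G,A]].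 -/
/-!
The entry `(i, j)` of every matrix in the statement is `sign (ĩ · j̃ + r)` for a suitable shift `r`:
`r = -1` for the game matrix, `r = 1` for `A` and `r = -3` for `B`, and the corners
`𝒢_{2^n,2^j}`, `𝒢̄_{2^n,2^j}` are such matrices of size `2^j` because the `n - j` leading digits
of their indices agree, respectively disagree. Since `ĩ · j̃` is a sum over digits, splitting off
the leading digit writes `sign (ĩ · j̃ + r)` of size `2^(n+1)` as the `2 × 2` block matrix with
blocks of shifts `r + 1, r - 1, r - 1, r + 1`. This recursion identifies `A` and `B` level by
level, and two steps of it give the `4 × 4` pattern.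
-/

/-- `tilde k i` is the vector `ĩ_k ∈ {1,−1}^k`: the k-digit binary representation of
`i` (most significant digit first) with digit 0 replaced by 1 and digit 1 by −1. -/
def tilde (k : ℕ) (i : Fin (2 ^ k)) : Fin k → ℝ :=
  fun t => if Nat.testBit i.val (k - 1 - t.val) then -1 else 1

/-- The game matrix `𝒢_{2^k}` with entries
`(𝒢_{2^k})_{i,j} = (1, ĩ_k) ⋆ (−1, j̃_k) = sign(ĩ_k · j̃_k − 1)`. -/
noncomputable def gameMatrix (k : ℕ) : Matrix (Fin (2 ^ k)) (Fin (2 ^ k)) ℝ :=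
  Matrix.of fun i j => Real.sign ((∑ t, tilde k i t * tilde k j t) - 1)

/-- `𝒢_{2^k,x}`: the top-left `x × x` corner submatrix of `𝒢_{2^k}`. -/
noncomputable def cornerTL (k x : ℕ) (h : x ≤ 2 ^ k) : Matrix (Fin x) (Fin x) ℝ :=
  Matrix.of fun i j =>
    gameMatrix k ⟨i.val, lt_of_lt_of_le i.isLt h⟩ ⟨j.val, lt_of_lt_of_le j.isLt h⟩

/-- `𝒢̄_{2^k,x}`: the top-right `x × x` corner submatrix of `𝒢_{2^k}`
(rows `1,…,x`, columns `2^k−x+1,…,2^k`). -/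
noncomputable def cornerTR (k x : ℕ) (h : x ≤ 2 ^ k) : Matrix (Fin x) (Fin x) ℝ :=
  Matrix.of fun i j =>
    gameMatrix k ⟨i.val, lt_of_lt_of_le i.isLt h⟩
      ⟨2 ^ k - x + j.val, by omega⟩

/-- The canonical equivalence `Fin (2^m) ⊕ Fin (2^m) ≃ Fin (2^(m+1))`. -/
def finPowEquiv (m : ℕ) : Fin (2 ^ m) ⊕ Fin (2 ^ m) ≃ Fin (2 ^ (m + 1)) :=
  finSumFinEquiv.trans (finCongr (by rw [pow_succ, mul_two]))

/-- The `2 × 2` block matrix `[[W,X],[Y,Z]]` with blocks of size `2^m × 2^m`,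
as a `2^(m+1) × 2^(m+1)` matrix. -/
noncomputable def blk {m : ℕ} (W X Y Z : Matrix (Fin (2 ^ m)) (Fin (2 ^ m)) ℝ) :
    Matrix (Fin (2 ^ (m + 1))) (Fin (2 ^ (m + 1))) ℝ :=
  Matrix.reindex (finPowEquiv m) (finPowEquiv m) (Matrix.fromBlocks W X Y Z)

/-- The Hadamard matrix `H_m`, defined recursively by `H_0 = (1)` and
`H_{m+1} = (1/√2)[[H_m, H_m],[H_m, −H_m]]`. -/
noncomputable def Had : (m : ℕ) → Matrix (Fin (2 ^ m)) (Fin (2 ^ m)) ℝ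
  | 0 => Matrix.of fun _ _ => 1
  | m + 1 => (Real.sqrt 2)⁻¹ • blk (Had m) (Had m) (Had m) (-(Had m))

/-- The matrices `A_{2^j}` (relative to base size `2^n`, `n = k − 2`) defined by
`A_1 = (1)` and `A_{2^{j+1}} = [[A_{2^j}, 𝒢_{2^n,2^j}],[𝒢_{2^n,2^j}, A_{2^j}]]`. -/
noncomputable def Amat (n : ℕ) : (j : ℕ) → 2 ^ j ≤ 2 ^ n → Matrix (Fin (2 ^ j)) (Fin (2 ^ j)) ℝ
  | 0, _ => Matrix.of fun _ _ => 1
  | j + 1, h =>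
      blk (Amat n j ((Nat.pow_le_pow_right (by norm_num) (Nat.le_succ j)).trans h))
        (cornerTL n (2 ^ j) ((Nat.pow_le_pow_right (by norm_num) (Nat.le_succ j)).trans h))
        (cornerTL n (2 ^ j) ((Nat.pow_le_pow_right (by norm_num) (Nat.le_succ j)).trans h))
        (Amat n j ((Nat.pow_le_pow_right (by norm_num) (Nat.le_succ j)).trans h))

/-- The matrices `B_{2^j}` (relative to base size `2^n`, `n = k − 2`) defined by
`B_1 = (−1)` and `B_{2^{j+1}} = [[𝒢̄_{2^n,2^j}, B_{2^j}],[B_{2^j}, 𝒢̄_{2^n,2^j}]]`. -/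
noncomputable def Bmat (n : ℕ) : (j : ℕ) → 2 ^ j ≤ 2 ^ n → Matrix (Fin (2 ^ j)) (Fin (2 ^ j)) ℝ
  | 0, _ => Matrix.of fun _ _ => -1
  | j + 1, h =>
      blk (cornerTR n (2 ^ j) ((Nat.pow_le_pow_right (by norm_num) (Nat.le_succ j)).trans h))
        (Bmat n j ((Nat.pow_le_pow_right (by norm_num) (Nat.le_succ j)).trans h))
        (Bmat n j ((Nat.pow_le_pow_right (by norm_num) (Nat.le_succ j)).trans h))
        (cornerTR n (2 ^ j) ((Nat.pow_le_pow_right (by norm_num) (Nat.le_succ j)).trans h))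

open Finset

/-- `ĩ_k · j̃_k`, with the digits of `i` and `j` read least significant first. -/
noncomputable def signInner (k i j : ℕ) : ℝ :=
  ∑ s ∈ range k, if Nat.testBit i s = Nat.testBit j s then 1 else -1

noncomputable def signGram (k : ℕ) (r : ℝ) : Matrix (Fin (2 ^ k)) (Fin (2 ^ k)) ℝ :=
  Matrix.of fun i j => Real.sign (signInner k i j + r)

lemma sum_tilde_mul_tilde (k : ℕ) (i j : Fin (2 ^ k)) :
    ∑ t, tilde k i t * tilde k j t = signInner k i j := by
  rw [signInner, ← Fin.sum_univ_eq_sum_range]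
  refine Fintype.sum_equiv Fin.revPerm _ _ fun t => ?_
  have hrev : k - 1 - t.val = (Fin.revPerm t).val := by
    simp only [Fin.revPerm_apply, Fin.val_rev]; omega
  unfold tilde
  rw [hrev]
  cases Nat.testBit i.val (Fin.revPerm t) <;> cases Nat.testBit j.val (Fin.revPerm t) <;> norm_num

lemma gameMatrix_eq_signGram (k : ℕ) : gameMatrix k = signGram k (-1) := by
  ext i j
  rw [gameMatrix, signGram, Matrix.of_apply, Matrix.of_apply, sum_tilde_mul_tilde, sub_eq_add_neg]

lemma signInner_self (k i : ℕ) : signInner k i i = k := by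
  simp [signInner]

lemma signInner_zero_two_pow_sub_one (k : ℕ) : signInner k 0 (2 ^ k - 1) = -k := by
  rw [signInner, sum_congr rfl fun s hs => if_neg (by
    simp [Nat.testBit_two_pow_sub_one, mem_range.mp hs])]
  simp

lemma signInner_two_pow_mul_add {K n a b : ℕ} (hK : K ≤ n) (c d : ℕ) (ha : a < 2 ^ K)
    (hb : b < 2 ^ K) :
    signInner n (2 ^ K * c + a) (2 ^ K * d + b) = signInner K a b + signInner (n - K) c d := by
  unfold signInner
  rw [← sum_range_add_sum_Ico _ hK, sum_Ico_eq_sum_range]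
  congr 1
  · refine sum_congr rfl fun s hs => ?_
    rw [Nat.testBit_two_pow_mul_add c ha, Nat.testBit_two_pow_mul_add d hb,
      if_pos (mem_range.mp hs), if_pos (mem_range.mp hs)]
  · refine sum_congr rfl fun s _ => ?_
    simp [Nat.testBit_two_pow_mul_add c ha, Nat.testBit_two_pow_mul_add d hb]

lemma signInner_of_lt_two_pow {j n a b : ℕ} (hj : j ≤ n) (ha : a < 2 ^ j) (hb : b < 2 ^ j) :
    signInner n a b = signInner j a b + (n - j) := by
  simpa [signInner_self, Nat.cast_sub hj] using signInner_two_pow_mul_add hj 0 0 ha hb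

lemma signInner_two_pow_sub_two_pow_add {j n a b : ℕ} (hj : j ≤ n) (ha : a < 2 ^ j)
    (hb : b < 2 ^ j) :
    signInner n a (2 ^ n - 2 ^ j + b) = signInner j a b - (n - j) := by
  have hpow : 2 ^ j * (2 ^ (n - j) - 1) = 2 ^ n - 2 ^ j := by
    rw [Nat.mul_sub, mul_one, ← pow_add, Nat.add_sub_cancel' hj]
  have h := signInner_two_pow_mul_add hj 0 (2 ^ (n - j) - 1) ha hb
  rw [Nat.mul_zero, Nat.zero_add, hpow, signInner_zero_two_pow_sub_one, Nat.cast_sub hj] at h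
  rw [h]
  ring

lemma blk_apply_finPowEquiv {m : ℕ} (W X Y Z : Matrix (Fin (2 ^ m)) (Fin (2 ^ m)) ℝ)
    (s t : Fin (2 ^ m) ⊕ Fin (2 ^ m)) :
    blk W X Y Z (finPowEquiv m s) (finPowEquiv m t) = Matrix.fromBlocks W X Y Z s t := by
  simp [blk]

lemma finPowEquiv_inl_val {m : ℕ} (a : Fin (2 ^ m)) :
    (finPowEquiv m (Sum.inl a) : ℕ) = 2 ^ m * 0 + a := by
  simp [finPowEquiv]

lemma finPowEquiv_inr_val {m : ℕ} (a : Fin (2 ^ m)) :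
    (finPowEquiv m (Sum.inr a) : ℕ) = 2 ^ m * 1 + a := by
  simp [finPowEquiv, add_comm]

lemma signGram_succ (n : ℕ) (r : ℝ) :
    signGram (n + 1) r =
      blk (signGram n (r + 1)) (signGram n (r - 1)) (signGram n (r - 1)) (signGram n (r + 1)) := by
  ext i j
  obtain ⟨s, rfl⟩ := (finPowEquiv n).surjective i
  obtain ⟨t, rfl⟩ := (finPowEquiv n).surjective j
  rw [blk_apply_finPowEquiv]
  rcases s with a | a <;> rcases t with b | b <;>
    simp only [signGram, Matrix.of_apply, Matrix.fromBlocks_apply₁₁, Matrix.fromBlocks_apply₁₂,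
      Matrix.fromBlocks_apply₂₁, Matrix.fromBlocks_apply₂₂, finPowEquiv_inl_val,
      finPowEquiv_inr_val, signInner_two_pow_mul_add (Nat.le_succ n) _ _ a.isLt b.isLt] <;>
    norm_num [signInner] <;> ring_nf

lemma cornerTL_eq_signGram {j n : ℕ} (h : 2 ^ j ≤ 2 ^ n) :
    cornerTL n (2 ^ j) h = signGram j (n - j - 1) := by
  have hj : j ≤ n := (Nat.pow_le_pow_iff_right one_lt_two).mp h
  ext a b
  rw [cornerTL, signGram, Matrix.of_apply, Matrix.of_apply, gameMatrix_eq_signGram, signGram,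
    Matrix.of_apply, signInner_of_lt_two_pow hj a.isLt b.isLt]
  ring_nf

lemma cornerTR_eq_signGram {j n : ℕ} (h : 2 ^ j ≤ 2 ^ n) :
    cornerTR n (2 ^ j) h = signGram j (j - n - 1) := by
  have hj : j ≤ n := (Nat.pow_le_pow_iff_right one_lt_two).mp h
  ext a b
  rw [cornerTR, signGram, Matrix.of_apply, Matrix.of_apply, gameMatrix_eq_signGram, signGram,
    Matrix.of_apply, signInner_two_pow_sub_two_pow_add hj a.isLt b.isLt]
  ring_nf

lemma Amat_eq_signGram (n j : ℕ) (h : 2 ^ j ≤ 2 ^ n) :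
    Amat n j h = signGram j (n - j + 1) := by
  induction j with
  | zero =>
    ext a b
    simp [Amat, signGram, signInner, Real.sign_of_pos (by positivity : (0 : ℝ) < n + 1)]
  | succ j ih =>
    rw [Amat, ih, cornerTL_eq_signGram, signGram_succ]
    congr 2 <;> push_cast <;> ring

lemma Bmat_eq_signGram (n j : ℕ) (h : 2 ^ j ≤ 2 ^ n) :
    Bmat n j h = signGram j (j - n - 3) := by
  induction j with
  | zero =>
    ext a b
    simp only [Bmat, signGram, Matrix.of_apply, signInner, range_zero, sum_empty]
    rw [Real.sign_of_neg (by push_cast; linarith [n.cast_nonneg (α := ℝ)])]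
  | succ j ih =>
    rw [Bmat, ih, cornerTR_eq_signGram, signGram_succ]
    congr 2 <;> push_cast <;> ring

/-- Let `k ≥ 4` (here `k = m + 4`) and `q = 2^{k−2}`. With
`G = 𝒢_{2^{k−2}}`, `A = A_{2^{k−2}}` and `B = B_{2^{k−2}}` as above, the game
matrix `𝒢_{2^k}` equals the 4×4 block matrix (blocks of size `q × q`)
`[[A,G,G,B],[G,A,B,G],[G,B,A,G],[B,G,G,A]]`. -/
theorem stmt_15 (m : ℕ) :
    gameMatrix (m + 4) =
      blk
        (blk (Amat (m + 2) (m + 2) le_rfl) (gameMatrix (m + 2))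
          (gameMatrix (m + 2)) (Amat (m + 2) (m + 2) le_rfl))
        (blk (gameMatrix (m + 2)) (Bmat (m + 2) (m + 2) le_rfl)
          (Bmat (m + 2) (m + 2) le_rfl) (gameMatrix (m + 2)))
        (blk (gameMatrix (m + 2)) (Bmat (m + 2) (m + 2) le_rfl)
          (Bmat (m + 2) (m + 2) le_rfl) (gameMatrix (m + 2)))
        (blk (Amat (m + 2) (m + 2) le_rfl) (gameMatrix (m + 2))
          (gameMatrix (m + 2)) (Amat (m + 2) (m + 2) le_rfl)) := by
  rw [gameMatrix_eq_signGram, gameMatrix_eq_signGram, Amat_eq_signGram, Bmat_eq_signGram,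
    signGram_succ (m + 3), signGram_succ (m + 2) (-1 + 1), signGram_succ (m + 2) (-1 - 1)]
  norm_num
end
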